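/- (Exponential stability criterion for (m,K)-weak execution.) Let K ≥ 1 and 0 ≤ m ≤ K be natural numbers, set m̄ := K − m, let σ : ℕ₀ → {0,1} satisfy the (m,K)-constraint (for every k, Σ_{i=k}^{k+K−1} σ_i ≤ m̄), and let 0 < ρ₀ ≤ ρ₁ and α ≥ 1 be real numbers. Suppose x : ℕ₀ → ℝⁿ satisfies the abstraction guarantee |x_k| ≤ α |x_0| ∏_{i=0}^{k−1} ρ_{σ_i} for all k, where ρ_{σ_i} := ρ₀ if σ_i = 0 and ρ₁ if σ_i = 1. If ρ̃ := ρ₀^{m/K} ρ₁^{(K−m)/K} < 1, then the system is exponentially stable: |x_k| ≤ α α̃ ρ̃^k |x_0| for all k ∈ ℕ₀, where α̃ := (ρ₁/ρ₀)^{K−m}. -/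

import Mathlib

/-!
Write `r := ρ₁ / ρ₀ ≥ 1`. Bounding each factor by `ρ₀ r^{σ_i}` gives
`∏_{i<k} ρ_{σ_i} ≤ ρ₀^k r^{s_k}` with `s_k := ∑_{i<k} σ_i`. Cutting `[0, k)` into `⌊k/K⌋ + 1`
windows of length `K`, the `(m,K)`-constraint gives `s_k ≤ (⌊k/K⌋ + 1)(K − m) ≤ (K − m) + k (K − m)/K`,
hence `ρ₀^k r^{s_k} ≤ r^{K−m} (ρ₀ r^{(K−m)/K})^k = α̃ ρ̃^k`.
-/

open Finset

section WindowSums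

variable (f : ℕ → ℕ) {K M : ℕ}

theorem sum_range_mul_le_of_sum_Ico_le (h : ∀ j, ∑ i ∈ Ico j (j + K), f i ≤ M) (q : ℕ) :
    ∑ i ∈ range (q * K), f i ≤ q * M := by
  induction q with
  | zero => simp
  | succ q ih =>
    rw [Nat.succ_mul, range_eq_Ico, ← sum_Ico_consecutive f (Nat.zero_le _) (Nat.le_add_right _ K),
      ← range_eq_Ico, Nat.succ_mul]
    exact Nat.add_le_add ih (h _)

theorem sum_range_le_of_sum_Ico_le (hK : 0 < K) (h : ∀ j, ∑ i ∈ Ico j (j + K), f i ≤ M)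
    (k : ℕ) : ∑ i ∈ range k, f i ≤ (k / K + 1) * M := by
  have hk : k ≤ (k / K + 1) * K := by
    rw [Nat.succ_mul]; exact (Nat.lt_div_mul_add hK).le
  exact (sum_le_sum_of_subset (range_subset_range.2 hk)).trans
    (sum_range_mul_le_of_sum_Ico_le f h _)

end WindowSums

theorem prod_ite_le_pow_mul_pow_sum {ι : Type*} (s : Finset ι) (σ : ι → ℕ) {ρ₀ ρ₁ : ℝ}
    (h0 : 0 < ρ₀) (h01 : ρ₀ ≤ ρ₁) :
    ∏ i ∈ s, (if σ i = 0 then ρ₀ else ρ₁) ≤ ρ₀ ^ s.card * (ρ₁ / ρ₀) ^ ∑ i ∈ s, σ i := by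
  have hr : 1 ≤ ρ₁ / ρ₀ := (one_le_div h0).2 h01
  rw [← prod_const, ← prod_pow_eq_pow_sum, ← prod_mul_distrib]
  refine prod_le_prod (fun i _ => by split_ifs <;> linarith) fun i _ => ?_
  split_ifs with hσ
  · simp [hσ]
  · calc ρ₁ = ρ₀ * (ρ₁ / ρ₀) ^ 1 := by field_simp
      _ ≤ ρ₀ * (ρ₁ / ρ₀) ^ σ i := by gcongr; exact Nat.one_le_iff_ne_zero.2 hσ

theorem pow_sum_range_le_of_sum_Ico_le (σ : ℕ → ℕ) {K M : ℕ} (hK : 0 < K)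
    (h : ∀ j, ∑ i ∈ Ico j (j + K), σ i ≤ M) {r : ℝ} (hr : 1 ≤ r) (k : ℕ) :
    r ^ ∑ i ∈ range k, σ i ≤ r ^ M * (r ^ ((M : ℝ) / K)) ^ k := by
  have hr0 : 0 ≤ r := zero_le_one.trans hr
  have hquot : ((k / K : ℕ) : ℝ) * M ≤ (M : ℝ) / K * k := by
    calc ((k / K : ℕ) : ℝ) * M ≤ (k : ℝ) / K * M := by gcongr; exact Nat.cast_div_le
      _ = (M : ℝ) / K * k := by ring
  calc r ^ ∑ i ∈ range k, σ i ≤ r ^ ((k / K + 1) * M) :=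
        pow_le_pow_right₀ hr (sum_range_le_of_sum_Ico_le σ hK h k)
    _ = r ^ M * r ^ (((k / K : ℕ) : ℝ) * M) := by
        rw [← Nat.cast_mul, Real.rpow_natCast, Nat.succ_mul, pow_add, mul_comm]
    _ ≤ r ^ M * r ^ ((M : ℝ) / K * k) := by gcongr
    _ = r ^ M * (r ^ ((M : ℝ) / K)) ^ k := by rw [Real.rpow_mul_natCast hr0]

theorem rpow_one_sub_mul_rpow {a b : ℝ} (ha : 0 < a) (hb : 0 ≤ b) (t : ℝ) :
    a ^ (1 - t) * b ^ t = a * (b / a) ^ t := by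
  rw [Real.rpow_sub ha, Real.rpow_one, Real.div_rpow hb ha.le]
  field_simp

theorem stmt13_general {n : ℕ} (K m : ℕ) (hK : 1 ≤ K) (hm : m ≤ K)
    (σ : ℕ → ℕ)
    (hmk : ∀ k, ∑ i ∈ Finset.Ico k (k + K), σ i ≤ K - m)
    (ρ₀ ρ₁ α : ℝ) (h0 : 0 < ρ₀) (h01 : ρ₀ ≤ ρ₁)
    (x : ℕ → EuclideanSpace ℝ (Fin n))
    (hx : ∀ k, ‖x k‖ ≤ α * ‖x 0‖ * ∏ i ∈ Finset.range k, if σ i = 0 then ρ₀ else ρ₁) :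
    ∀ k, ‖x k‖ ≤ α * (ρ₁ / ρ₀) ^ (K - m) *
      (ρ₀ ^ ((m : ℝ) / (K : ℝ)) * ρ₁ ^ (((K : ℝ) - (m : ℝ)) / (K : ℝ))) ^ k * ‖x 0‖ := by
  intro k
  have hKm : ((K - m : ℕ) : ℝ) / K = ((K : ℝ) - m) / K := by rw [Nat.cast_sub hm]
  have hρ : ρ₀ ^ ((m : ℝ) / K) * ρ₁ ^ (((K : ℝ) - m) / K)
      = ρ₀ * (ρ₁ / ρ₀) ^ (((K - m : ℕ) : ℝ) / K) := by
    rw [hKm, ← rpow_one_sub_mul_rpow h0 (h0.le.trans h01)]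
    congr 2
    field_simp
    ring
  have hαx : 0 ≤ α * ‖x 0‖ := (norm_nonneg _).trans (by simpa using hx 0)
  have hgain := pow_sum_range_le_of_sum_Ico_le σ hK hmk ((one_le_div h0).2 h01) k
  calc ‖x k‖ ≤ α * ‖x 0‖ * (ρ₀ ^ k * (ρ₁ / ρ₀) ^ ∑ i ∈ range k, σ i) := by
        refine (hx k).trans (mul_le_mul_of_nonneg_left ?_ hαx)
        simpa using prod_ite_le_pow_mul_pow_sum (range k) σ h0 h01
    _ ≤ α * ‖x 0‖ * (ρ₀ ^ k * ((ρ₁ / ρ₀) ^ (K - m) * ((ρ₁ / ρ₀) ^ (((K - m : ℕ) : ℝ) / K)) ^ k)) := by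
        gcongr
    _ = _ := by rw [hρ]; ring

/-- Exponential stability criterion for `(m,K)`-weak execution: if the abstraction
guarantee `|x_k| ≤ α |x_0| ∏_{i<k} ρ_{σ_i}` holds (with `ρ_{σ_i} = ρ₀` for nominal,
`ρ₁` for skipped steps) under the `(m,K)`-constraint, and
`ρ̃ = ρ₀^{m/K} ρ₁^{(K−m)/K} < 1`, then `|x_k| ≤ α α̃ ρ̃^k |x_0|` with
`α̃ = (ρ₁/ρ₀)^{K−m}`. -/
theorem stmt13 {n : ℕ} (K m : ℕ) (hK : 1 ≤ K) (hm : m ≤ K)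
    (σ : ℕ → ℕ) (hσ : ∀ i, σ i ≤ 1)
    (hmk : ∀ k, ∑ i ∈ Finset.Ico k (k + K), σ i ≤ K - m)
    (ρ₀ ρ₁ α : ℝ) (h0 : 0 < ρ₀) (h01 : ρ₀ ≤ ρ₁) (hα : 1 ≤ α)
    (x : ℕ → EuclideanSpace ℝ (Fin n))
    (hx : ∀ k, ‖x k‖ ≤ α * ‖x 0‖ * ∏ i ∈ Finset.range k, if σ i = 0 then ρ₀ else ρ₁)
    (hρt : ρ₀ ^ ((m : ℝ) / (K : ℝ)) * ρ₁ ^ (((K : ℝ) - (m : ℝ)) / (K : ℝ)) < 1) :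
    ∀ k, ‖x k‖ ≤ α * (ρ₁ / ρ₀) ^ (K - m) *
      (ρ₀ ^ ((m : ℝ) / (K : ℝ)) * ρ₁ ^ (((K : ℝ) - (m : ℝ)) / (K : ℝ))) ^ k * ‖x 0‖ :=
  stmt13_general K m hK hm σ hmk ρ₀ ρ₁ α h0 h01 x hx
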